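/- arXiv:2106.14308 — 4 statements merged into one kernel-verified Lean document; each statement's English description precedes it below -/
import Mathlib

section
/- Let $\{a(k)\}$ satisfy $\frac{d_1}{k} \le a(k) \le d_3 k^{-d_2}$ for all $k \ge n_0$, where $d_1, d_3 > 0$ and $0 < d_2 \le 1$, and $a(k) \le 1$. Define $\chi(n,m+1) = \prod_{k=m+1}^{n}(1-a(k))$. Then $\max_{n_0 \le m \le n} a(m)\chi(n,m+1) \le d_3 2^{d_1} \beta_{n_0}(n)$, where $\beta_{n_0}(n) = \frac{1}{n_0^{d_2-d_1} n^{d_1}}$ if $d_1 \le d_2$ and $\beta_{n_0}(n) = \frac{1}{n^{d_2}}$ otherwise. -/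
/-!
Each factor of `χ(n, m+1)` satisfies `1 - a(k) ≤ exp(-d₁/k) ≤ (k/(k+1))^{d₁}`, so the product
telescopes to at most `((m+1)/(n+1))^{d₁} ≤ (2m/n)^{d₁}`. Together with `a(m) ≤ d₃ m^{-d₂}` this
bounds the weight by `d₃ 2^{d₁} m^{d₁-d₂} n^{-d₁}`, and `m ↦ m^{d₁-d₂}` is monotone on `[n₀, n]`:
it is largest at `m = n₀` when `d₁ ≤ d₂` and at `m = n` otherwise.
-/

open Finset Real

lemma Real.exp_neg_inv_le_div_add_one {x : ℝ} (hx : 0 < x) : exp (-x⁻¹) ≤ x / (x + 1) :=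
  calc exp (-x⁻¹) = (exp x⁻¹)⁻¹ := exp_neg _
    _ ≤ (x⁻¹ + 1)⁻¹ := inv_anti₀ (by positivity) (add_one_le_exp _)
    _ = x / (x + 1) := by field_simp; ring

lemma one_sub_le_div_add_one_rpow {a d x : ℝ} (hd : 0 ≤ d) (hx : 0 < x) (ha : d / x ≤ a) :
    1 - a ≤ (x / (x + 1)) ^ d :=
  calc 1 - a ≤ 1 - d / x := by linarith
    _ ≤ exp (-(d / x)) := one_sub_le_exp_neg _
    _ = exp (-x⁻¹) ^ d := by rw [← exp_mul]; ring_nf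
    _ ≤ (x / (x + 1)) ^ d := rpow_le_rpow (exp_nonneg _) (exp_neg_inv_le_div_add_one hx) hd

lemma prod_Icc_div_add_one {m n : ℕ} (hmn : m ≤ n) :
    ∏ k ∈ Icc (m + 1) n, ((k : ℝ) / (k + 1)) = (m + 1) / (n + 1) := by
  induction n, hmn using Nat.le_induction with
  | base => simp [div_self (by positivity : (m : ℝ) + 1 ≠ 0)]
  | succ n hmn ih =>
    rw [prod_Icc_succ_top (by omega), ih]
    push_cast
    field_simp

lemma prod_one_sub_le_rpow {a : ℕ → ℝ} {d : ℝ} (hd : 0 ≤ d) (ha1 : ∀ k, a k ≤ 1) {m n : ℕ}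
    (hmn : m ≤ n) (ha : ∀ k, m < k → d / k ≤ a k) :
    ∏ k ∈ Icc (m + 1) n, (1 - a k) ≤ (((m : ℝ) + 1) / (n + 1)) ^ d := by
  rw [← prod_Icc_div_add_one hmn, ← finsetProd_rpow _ _ fun k _ => by positivity]
  refine prod_le_prod (fun k _ => sub_nonneg.2 (ha1 k)) fun k hk => ?_
  have hk : m < k := by rw [mem_Icc] at hk; omega
  exact one_sub_le_div_add_one_rpow hd (Nat.cast_pos.2 (by omega)) (ha k hk)

lemma add_one_div_add_one_le_two_mul_div {x y : ℝ} (hx : 1 ≤ x) (hxy : x ≤ y) :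
    (x + 1) / (y + 1) ≤ 2 * x / y := by
  rw [div_le_div_iff₀ (by linarith) (by linarith)]
  nlinarith

lemma rpow_sub_div_rpow_le {x₀ x y d₁ d₂ : ℝ} (hx₀ : 0 < x₀) (hx : x₀ ≤ x) (hxy : x ≤ y) :
    x ^ (d₁ - d₂) / y ^ d₁ ≤
      if d₁ ≤ d₂ then 1 / (x₀ ^ (d₂ - d₁) * y ^ d₁) else 1 / y ^ d₂ := by
  have hy : 0 < y := by linarith
  split_ifs with h
  · rw [one_div, mul_inv, ← rpow_neg hx₀.le, neg_sub, ← div_eq_mul_inv]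
    exact div_le_div_of_nonneg_right (rpow_le_rpow_of_nonpos hx₀ hx (by linarith)) (by positivity)
  · calc x ^ (d₁ - d₂) / y ^ d₁ ≤ y ^ (d₁ - d₂) / y ^ d₁ :=
          div_le_div_of_nonneg_right (rpow_le_rpow (by linarith) hxy (by linarith)) (by positivity)
      _ = 1 / y ^ d₂ := by rw [rpow_sub hy]; field_simp

theorem stmt_3_general (a : ℕ → ℝ) (d₁ d₂ d₃ : ℝ)
    (hd₁ : 0 < d₁) (hd₃ : 0 < d₃)
    (n₀ : ℕ) (hn₀ : 1 ≤ n₀)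
    (ha1 : ∀ k, a k ≤ 1)
    (hbound : ∀ k, n₀ ≤ k → d₁ / (k:ℝ) ≤ a k ∧ a k ≤ d₃ / (k:ℝ) ^ d₂) :
    ∀ n m : ℕ, n₀ ≤ m → m ≤ n →
      a m * ∏ k ∈ Finset.Icc (m+1) n, (1 - a k) ≤
        d₃ * (2:ℝ) ^ d₁ *
          (if d₁ ≤ d₂ then 1 / ((n₀:ℝ) ^ (d₂ - d₁) * (n:ℝ) ^ d₁)
           else 1 / (n:ℝ) ^ d₂) := by
  intro n m hm hmn
  have hn₀' : (1 : ℝ) ≤ n₀ := by exact_mod_cast hn₀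
  have hm' : (n₀ : ℝ) ≤ m := by exact_mod_cast hm
  have hmn' : (m : ℝ) ≤ n := by exact_mod_cast hmn
  have hχ : ∏ k ∈ Icc (m + 1) n, (1 - a k) ≤ (2 * (m : ℝ) / n) ^ d₁ :=
    (prod_one_sub_le_rpow hd₁.le ha1 hmn fun k hk => (hbound k (by omega)).1).trans
      (rpow_le_rpow (by positivity) (add_one_div_add_one_le_two_mul_div (by linarith) hmn') hd₁.le)
  calc a m * ∏ k ∈ Icc (m + 1) n, (1 - a k)
      ≤ d₃ / (m : ℝ) ^ d₂ * (2 * (m : ℝ) / n) ^ d₁ :=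
        mul_le_mul (hbound m hm).2 hχ (prod_nonneg fun k _ => sub_nonneg.2 (ha1 k)) (by positivity)
    _ = d₃ * 2 ^ d₁ * ((m : ℝ) ^ (d₁ - d₂) / (n : ℝ) ^ d₁) := by
        rw [div_rpow (by positivity) (by positivity), mul_rpow (by norm_num) (by positivity),
          rpow_sub (by linarith)]
        ring
    _ ≤ _ := by gcongr; exact rpow_sub_div_rpow_le (by linarith) hm' hmn'

/-- bound on the maximal weight `a(m) χ(n,m+1)` in terms of
`β_{n₀}(n)`, where `β_{n₀}(n) = n₀^{-(d₂-d₁)} n^{-d₁}` if `d₁ ≤ d₂` and `n^{-d₂}` otherwise. -/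
theorem stmt_3 (a : ℕ → ℝ) (d₁ d₂ d₃ : ℝ)
    (hd₁ : 0 < d₁) (hd₂ : 0 < d₂) (hd₂' : d₂ ≤ 1) (hd₃ : 0 < d₃)
    (n₀ : ℕ) (hn₀ : 1 ≤ n₀)
    (ha0 : ∀ k, 0 ≤ a k) (ha1 : ∀ k, a k ≤ 1)
    (hbound : ∀ k, n₀ ≤ k → d₁ / (k:ℝ) ≤ a k ∧ a k ≤ d₃ / (k:ℝ) ^ d₂) :
    ∀ n m : ℕ, n₀ ≤ m → m ≤ n →
      a m * ∏ k ∈ Finset.Icc (m+1) n, (1 - a k) ≤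
        d₃ * (2:ℝ) ^ d₁ *
          (if d₁ ≤ d₂ then 1 / ((n₀:ℝ) ^ (d₂ - d₁) * (n:ℝ) ^ d₁)
           else 1 / (n:ℝ) ^ d₂) :=
  stmt_3_general a d₁ d₂ d₃ hd₁ hd₃ n₀ hn₀ ha1 hbound
end

section
/- Consider Q-learning on a finite state space $S_1$ ($|S_1| = s$) and action space $A$ ($|A| = r$) with discount $\gamma \in (0,1)$, transition kernel $p(j|i,u)$, and cost $k(i,u)$. Define $g^{i,u}(Q) = k(i,u) + \gamma \sum_j p(j|i,u) \min_a Q(j,a)$ and $F^{i,u}(Q, X, Z) = \mathbb{1}\{X=i, Z=u\}(g^{i,u}(Q) - Q(i,u)) + Q(i,u)$. Let $\pi$ be any probability distribution on $S_1 \times A$ with $\pi(i,u) \ge \pi_{\min} > 0$ for all $(i,u)$. Then for all $Q_1, Q_2 \in \mathbb{R}^{s \times r}$: $\left\|\sum_{i,u} \pi(i,u)(F(Q_1,i,u) - F(Q_2,i,u))\right\|_\infty \le (1 - (1-\gamma)\pi_{\min}) \|Q_1 - Q_2\|_\infty$. -/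
/-! The averaged update replaces `Q (i, u)` by the convex combination
`π(i,u) · g(Q)(i,u) + (1 - π(i,u)) · Q(i,u)`. The Bellman operator `g` is a `γ`-contraction
in the max-norm, because `Q ↦ min_a Q(j, a)` is `1`-Lipschitz and `p(· | i, u)` averages;
mixing a `γ`-contraction with weight at least `π_min` into the identity contracts by
`1 - (1 - γ) π_min`. -/

open Finset

theorem abs_inf'_sub_inf'_le {ι α : Type*} [AddCommGroup α] [LinearOrder α]
    [IsOrderedAddMonoid α] {s : Finset ι} (hs : s.Nonempty) {f g : ι → α} {M : α}
    (h : ∀ i ∈ s, |f i - g i| ≤ M) : |s.inf' hs f - s.inf' hs g| ≤ M := by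
  refine abs_sub_le_iff.2 ⟨?_, ?_⟩ <;> rw [sub_le_comm] <;> refine le_inf' _ _ fun i hi => ?_
  · exact (sub_le_sub_right (inf'_le f hi) M).trans (sub_le_comm.1 (abs_sub_le_iff.1 (h i hi)).1)
  · exact (sub_le_sub_right (inf'_le g hi) M).trans (sub_le_comm.1 (abs_sub_le_iff.1 (h i hi)).2)

theorem abs_sum_mul_le_of_sum_eq_one {ι : Type*} {s : Finset ι} {w x : ι → ℝ} {M : ℝ}
    (hw0 : ∀ i ∈ s, 0 ≤ w i) (hw1 : ∑ i ∈ s, w i = 1) (hx : ∀ i ∈ s, |x i| ≤ M) :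
    |∑ i ∈ s, w i * x i| ≤ M :=
  calc |∑ i ∈ s, w i * x i| ≤ ∑ i ∈ s, w i * |x i| := by
        refine (abs_sum_le_sum_abs _ _).trans (sum_le_sum fun i hi => ?_)
        rw [abs_mul, abs_of_nonneg (hw0 i hi)]
    _ ≤ ∑ i ∈ s, w i * M := sum_le_sum fun i hi => mul_le_mul_of_nonneg_left (hx i hi) (hw0 i hi)
    _ = M := by rw [← sum_mul, hw1, one_mul]

theorem abs_mul_add_one_sub_mul_le {t tmin γ M a b : ℝ} (htmin : tmin ≤ t) (ht1 : t ≤ 1)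
    (htmin0 : 0 ≤ tmin) (hγ1 : γ ≤ 1) (ha : |a| ≤ γ * M) (hb : |b| ≤ M) :
    |t * a + (1 - t) * b| ≤ (1 - (1 - γ) * tmin) * M := by
  have ht0 : 0 ≤ t := htmin0.trans htmin
  have hM0 : 0 ≤ M := (abs_nonneg b).trans hb
  calc |t * a + (1 - t) * b| ≤ t * |a| + (1 - t) * |b| := by
        refine (abs_add_le _ _).trans_eq ?_
        rw [abs_mul, abs_mul, abs_of_nonneg ht0, abs_of_nonneg (sub_nonneg.2 ht1)]
    _ ≤ t * (γ * M) + (1 - t) * M := by gcongr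
    _ = (1 - (1 - γ) * t) * M := by ring
    _ ≤ (1 - (1 - γ) * tmin) * M := by gcongr

section QLearning

variable {S A : Type*} [Fintype S] [Fintype A]

def bellman [Nonempty A] (γ : ℝ) (p : S → A → S → ℝ) (k : S → A → ℝ) (Q : S → A → ℝ)
    (i : S) (u : A) : ℝ :=
  k i u + γ * ∑ j, p i u j * univ.inf' univ_nonempty (Q j)

theorem abs_bellman_sub_le [Nonempty A] {γ M : ℝ} (hγ : 0 ≤ γ) {p : S → A → S → ℝ}
    (hp0 : ∀ i u j, 0 ≤ p i u j) (hp1 : ∀ i u, ∑ j, p i u j = 1) (k : S → A → ℝ)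
    {Q₁ Q₂ : S → A → ℝ} (hQ : ∀ j a, |Q₁ j a - Q₂ j a| ≤ M) (i : S) (u : A) :
    |bellman γ p k Q₁ i u - bellman γ p k Q₂ i u| ≤ γ * M := by
  have hmin : |∑ j, p i u j *
      (univ.inf' univ_nonempty (Q₁ j) - univ.inf' univ_nonempty (Q₂ j))| ≤ M :=
    abs_sum_mul_le_of_sum_eq_one (fun j _ => hp0 i u j) (hp1 i u)
      fun j _ => abs_inf'_sub_inf'_le _ fun a _ => hQ j a
  simp only [bellman, add_sub_add_left_eq_sub, ← mul_sub, ← sum_sub_distrib, abs_mul,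
    abs_of_nonneg hγ]
  exact mul_le_mul_of_nonneg_left hmin hγ

variable [DecidableEq S] [DecidableEq A]

/-- The paper's `F(Q, X, Z)`, with an arbitrary operator `G` in place of the Bellman operator. -/
def asyncUpdate (G : (S → A → ℝ) → S → A → ℝ) (Q : S → A → ℝ) (X : S) (Z : A) (i : S)
    (u : A) : ℝ :=
  (if X = i ∧ Z = u then 1 else 0) * (G Q i u - Q i u) + Q i u

theorem sum_mul_asyncUpdate {π : S → A → ℝ} (hπ1 : ∑ X, ∑ Z, π X Z = 1)
    (G : (S → A → ℝ) → S → A → ℝ) (Q : S → A → ℝ) (i : S) (u : A) :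
    ∑ X, ∑ Z, π X Z * asyncUpdate G Q X Z i u = π i u * G Q i u + (1 - π i u) * Q i u := by
  simp only [asyncUpdate, mul_add, sum_add_distrib, ← sum_mul, hπ1, ite_and, mul_ite,
    mul_zero, ite_mul, zero_mul, sum_ite_eq', mem_univ, if_true, sum_ite_irrel,
    sum_const_zero]
  ring

theorem abs_sum_mul_asyncUpdate_sub_le {π : S → A → ℝ} (hπ1 : ∑ X, ∑ Z, π X Z = 1)
    {πmin : ℝ} (hπmin : 0 ≤ πmin) (hπ0 : ∀ i u, πmin ≤ π i u) {γ M : ℝ} (hγ1 : γ ≤ 1)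
    {G : (S → A → ℝ) → S → A → ℝ} {Q₁ Q₂ : S → A → ℝ}
    (hG : ∀ i u, |G Q₁ i u - G Q₂ i u| ≤ γ * M) (hQ : ∀ i u, |Q₁ i u - Q₂ i u| ≤ M)
    (i : S) (u : A) :
    |∑ X, ∑ Z, π X Z * (asyncUpdate G Q₁ X Z i u - asyncUpdate G Q₂ X Z i u)| ≤
      (1 - (1 - γ) * πmin) * M := by
  have hπ_nonneg : ∀ X Z, 0 ≤ π X Z := fun X Z => hπmin.trans (hπ0 X Z)
  have hπ_le_one : π i u ≤ 1 := hπ1 ▸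
    calc π i u ≤ ∑ Z, π i Z := single_le_sum (fun Z _ => hπ_nonneg i Z) (mem_univ u)
      _ ≤ ∑ X, ∑ Z, π X Z :=
        single_le_sum (f := fun X => ∑ Z, π X Z)
          (fun X _ => sum_nonneg fun Z _ => hπ_nonneg X Z) (mem_univ i)
  simp only [mul_sub, sum_sub_distrib, sum_mul_asyncUpdate hπ1]
  convert abs_mul_add_one_sub_mul_le (hπ0 i u) hπ_le_one hπmin hγ1 (hG i u) (hQ i u) using 2
  ring

end QLearning

/-- the averaged asynchronous Q-learning map is a max-norm contraction with
factor `1 - (1-γ)π_min`. -/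
theorem stmt_9 {S₁ A : Type*} [Fintype S₁] [Fintype A] [Nonempty S₁] [Nonempty A]
    [DecidableEq S₁] [DecidableEq A]
    (γ : ℝ) (hγ : γ ∈ Set.Ioo (0:ℝ) 1)
    (p : S₁ → A → S₁ → ℝ) (hp0 : ∀ i u j, 0 ≤ p i u j) (hp1 : ∀ i u, ∑ j, p i u j = 1)
    (k : S₁ → A → ℝ)
    (π : S₁ → A → ℝ) (hπ1 : ∑ i, ∑ u, π i u = 1)
    (πmin : ℝ) (hπmin : 0 < πmin) (hπ0 : ∀ i u, πmin ≤ π i u)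
    (g : (S₁ → A → ℝ) → S₁ → A → ℝ)
    (hg : ∀ Q i u, g Q i u =
      k i u + γ * ∑ j, p i u j * (Finset.univ.inf' Finset.univ_nonempty (Q j)))
    (F : (S₁ → A → ℝ) → S₁ → A → S₁ → A → ℝ)
    (hF : ∀ Q X Z i u,
      F Q X Z i u = (if X = i ∧ Z = u then (1:ℝ) else 0) * (g Q i u - Q i u) + Q i u)
    (Q₁ Q₂ : S₁ → A → ℝ) :
    (Finset.univ.sup' Finset.univ_nonempty fun iu : S₁ × A =>
        |∑ X, ∑ Z, π X Z * (F Q₁ X Z iu.1 iu.2 - F Q₂ X Z iu.1 iu.2)|) ≤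
      (1 - (1-γ) * πmin) *
        (Finset.univ.sup' Finset.univ_nonempty fun iu : S₁ × A =>
          |Q₁ iu.1 iu.2 - Q₂ iu.1 iu.2|) := by
  have hg : g = bellman γ p k := by ext Q i u; exact hg Q i u
  have hF : F = asyncUpdate g := by ext Q X Z i u; exact hF Q X Z i u
  subst hg hF
  set M := univ.sup' univ_nonempty fun iu : S₁ × A => |Q₁ iu.1 iu.2 - Q₂ iu.1 iu.2|
  have hQ : ∀ i u, |Q₁ i u - Q₂ i u| ≤ M := fun i u =>
    le_sup' (fun iu : S₁ × A => |Q₁ iu.1 iu.2 - Q₂ iu.1 iu.2|) (mem_univ (i, u))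
  exact sup'_le _ _ fun iu _ =>
    abs_sum_mul_asyncUpdate_sub_le hπ1 hπmin.le hπ0 hγ.2.le
      (abs_bellman_sub_le hγ.1.le hp0 hp1 k hQ) hQ iu.1 iu.2
end

section
/- Let $P$ be an irreducible $s \times s$ stochastic matrix with stationary distribution $\pi$ having positive entries, $D = \mathrm{diag}(\pi)$, $\gamma \in (0,1)$, and $\Phi \in \mathbb{R}^{s \times M}$ full column rank. For $r \in \mathbb{R}^M$, define $F(r,i) = \varphi(i)k(i) + \gamma \varphi(i)\sum_j p(j|i)\varphi(j)^T r - \varphi(i)\varphi(i)^T r + r$, where $\varphi(i)^T$ is the $i$-th row of $\Phi$. Let $\lambda_M$ be the largest singular value of $\Phi^T\sqrt{D}$ and assume $\lambda_M < \frac{\sqrt{2(1-\gamma)}}{1+\gamma}$. Then there exists $\alpha < 1$, explicitly $\alpha = \sqrt{1 - \min_{r\ne 0}\frac{\|\Phi r\|_D^2}{\|r\|^2}(2(1-\gamma) - \lambda_M^2(1+\gamma)^2)}$, such that for all $r, s' \in \mathbb{R}^M$: $\|\sum_i \pi(i)(F(r,i) - F(s',i))\|_2 \le \alpha \|r - s'\|_2$.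 -/
/-!
Write `d = r - s'` and `y = Φ d`. The averaged difference is `d + Φᵀ D (γ P - I) y`. Since `P`
is stochastic with stationary law `π`, Jensen's inequality makes it a contraction for `‖·‖_D`,
so `⟪y, (γ P - I) y⟫_D ≤ -(1 - γ) ‖y‖_D²` and `‖(γ P - I) y‖_D ≤ (1 + γ) ‖y‖_D`. Writing
`Φᵀ D = Ψ √D` bounds the second summand by `λ_M (1 + γ) ‖y‖_D`, so the squared norm is at most
`‖d‖² - c ‖y‖_D²` with `c = 2(1 - γ) - λ_M² (1 + γ)² > 0`. Finally `‖y‖_D² ≥ μ ‖d‖²`, where the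
Rayleigh-quotient infimum `μ` is positive because `Φ` is injective.
-/

open Finset Matrix

section SumsOfSquares

variable {ι : Type*} [Fintype ι]

theorem sum_sq_pos_of_ne_zero {x : ι → ℝ} (hx : x ≠ 0) : 0 < ∑ i, x i ^ 2 := by
  have h := (dotProduct_self_eq_zero (v := x)).not.2 hx
  simp only [dotProduct, ← sq] at h
  exact (sum_nonneg fun i _ => sq_nonneg (x i)).lt_of_ne' h

theorem norm_toLp_eq_sqrt_sum_sq (x : ι → ℝ) :
    ‖(WithLp.toLp 2 x : EuclideanSpace ℝ ι)‖ = √(∑ i, x i ^ 2) := by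
  simp [EuclideanSpace.norm_eq]

theorem sq_sum_weight_mul_le (w f g : ι → ℝ) (hw : ∀ i, 0 ≤ w i) :
    (∑ i, w i * (f i * g i)) ^ 2 ≤ (∑ i, w i * f i ^ 2) * ∑ i, w i * g i ^ 2 :=
  sum_sq_le_sum_mul_sum_of_sq_le_mul _ (fun i _ => mul_nonneg (hw i) (sq_nonneg _))
    (fun i _ => mul_nonneg (hw i) (sq_nonneg _)) fun i _ => (by ring : _ = _).le

theorem sum_weight_mul_sub_sq (w a b : ι → ℝ) (t : ℝ) :
    ∑ i, w i * (t * a i - b i) ^ 2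
      = t ^ 2 * ∑ i, w i * a i ^ 2 - 2 * t * ∑ i, w i * (a i * b i) + ∑ i, w i * b i ^ 2 := by
  simp only [mul_sum, ← sum_sub_distrib, ← sum_add_distrib]
  exact sum_congr rfl fun i _ => by ring

end SumsOfSquares

section RayleighQuotient

variable {m n : Type*} [Fintype m] [Fintype n]

theorem exists_pos_mul_sum_sq_le_sum_sq_mulVec (A : Matrix m n ℝ)
    (hA : Function.Injective A.mulVec) :
    ∃ c > 0, ∀ x, c * ∑ j, x j ^ 2 ≤ ∑ i, (A *ᵥ x) i ^ 2 := by
  classical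
  have hinj : Function.Injective (toLpLin 2 2 A) := fun x y h =>
    WithLp.ofLp_injective 2 (hA (by simpa using congrArg WithLp.ofLp h))
  obtain ⟨K, hK, hanti⟩ := (toLpLin 2 2 A).exists_antilipschitzWith (LinearMap.ker_eq_bot.2 hinj)
  refine ⟨((K : ℝ) ^ 2)⁻¹, by positivity, fun x => ?_⟩
  have h := hanti.le_mul_dist (WithLp.toLp 2 x) 0
  simp only [dist_zero_right, map_zero, toLpLin_apply] at h
  rw [norm_toLp_eq_sqrt_sum_sq, norm_toLp_eq_sqrt_sum_sq, ← Real.sqrt_sq (NNReal.coe_nonneg K),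
    ← Real.sqrt_mul (sq_nonneg _), Real.sqrt_le_sqrt_iff (by positivity)] at h
  rwa [inv_mul_le_iff₀ (by positivity)]

theorem exists_pos_mul_sum_sq_le_sum_weight_mul_sq_mulVec (A : Matrix m n ℝ)
    (hA : Function.Injective A.mulVec) {w : m → ℝ} (hw : ∀ i, 0 < w i) :
    ∃ c > 0, ∀ x, c * ∑ j, x j ^ 2 ≤ ∑ i, w i * (A *ᵥ x) i ^ 2 := by
  classical
  have hinj : Function.Injective (diagonal (fun i => √(w i)) * A).mulVec := fun x y h => by
    refine hA (funext fun i => ?_)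
    have hi := congrFun h i
    simp only [← mulVec_mulVec, mulVec_diagonal] at hi
    exact mul_left_cancel₀ (Real.sqrt_pos.2 (hw i)).ne' hi
  obtain ⟨c, hc, h⟩ := exists_pos_mul_sum_sq_le_sum_sq_mulVec _ hinj
  refine ⟨c, hc, fun x => (h x).trans_eq (sum_congr rfl fun i _ => ?_)⟩
  rw [← mulVec_mulVec, mulVec_diagonal, mul_pow, Real.sq_sqrt (hw i).le]

theorem sum_sq_mulVec_le_of_isGreatest (A : Matrix m n ℝ) {lam : ℝ}
    (h : IsGreatest {t | ∃ v : n → ℝ, ∑ j, v j ^ 2 = 1 ∧ t = √(∑ i, (A *ᵥ v) i ^ 2)} lam)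
    (w : n → ℝ) : ∑ i, (A *ᵥ w) i ^ 2 ≤ lam ^ 2 * ∑ j, w j ^ 2 := by
  classical
  have hlam : 0 ≤ lam := by
    obtain ⟨v, -, rfl⟩ := h.1
    positivity
  let f := LinearMap.toContinuousLinearMap (toLpLin 2 2 A)
  have hf : ∀ v, ‖f (WithLp.toLp 2 v)‖ = √(∑ i, (A *ᵥ v) i ^ 2) := fun v => by
    simp [f, norm_toLp_eq_sqrt_sum_sq]
  have hnorm : ‖f‖ ≤ lam := by
    refine f.opNorm_le_of_unit_norm hlam fun x hx => h.2 ⟨x.ofLp, ?_, hf x.ofLp⟩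
    rwa [← WithLp.toLp_ofLp 2 x, norm_toLp_eq_sqrt_sum_sq, Real.sqrt_eq_one] at hx
  have hw : √(∑ i, (A *ᵥ w) i ^ 2) ≤ lam * √(∑ j, w j ^ 2) := by
    rw [← hf, ← norm_toLp_eq_sqrt_sum_sq]
    exact f.le_of_opNorm_le hnorm _
  rwa [← Real.sqrt_sq hlam, ← Real.sqrt_mul (sq_nonneg _),
    Real.sqrt_le_sqrt_iff (by positivity)] at hw

theorem le_iInf_div_sum_sq [Nonempty n] {Q : (n → ℝ) → ℝ} {c : ℝ}
    (h : ∀ x, c * ∑ j, x j ^ 2 ≤ Q x) :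
    c ≤ ⨅ x : {x : n → ℝ // x ≠ 0}, Q x / ∑ j, x.1 j ^ 2 := by
  have : Nonempty {x : n → ℝ // x ≠ 0} := nonempty_subtype.2 (exists_ne 0)
  exact le_ciInf fun x => (le_div_iff₀ (sum_sq_pos_of_ne_zero x.2)).2 (h x)

theorem iInf_div_sum_sq_mul_le {Q : (n → ℝ) → ℝ} (hQ : ∀ x, 0 ≤ Q x) (x : n → ℝ) :
    (⨅ y : {y : n → ℝ // y ≠ 0}, Q y / ∑ j, y.1 j ^ 2) * ∑ j, x j ^ 2 ≤ Q x := by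
  rcases eq_or_ne x 0 with rfl | hx
  · simpa using hQ 0
  have hbdd : BddBelow (Set.range fun y : {y : n → ℝ // y ≠ 0} => Q y / ∑ j, y.1 j ^ 2) :=
    ⟨0, Set.forall_mem_range.2 fun y => div_nonneg (hQ y) (sum_nonneg fun j _ => sq_nonneg _)⟩
  exact (le_div_iff₀ (sum_sq_pos_of_ne_zero hx)).1 (ciInf_le hbdd ⟨x, hx⟩)

end RayleighQuotient

section MarkovChain

variable {ι : Type*} [Fintype ι] [DecidableEq ι] {P : Matrix ι ι ℝ} {π : ι → ℝ}

theorem sq_mulVec_le_of_mem_rowStochastic (hP : P ∈ rowStochastic ℝ ι) (y : ι → ℝ) (i : ι) :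
    (P *ᵥ y) i ^ 2 ≤ ∑ j, P i j * y j ^ 2 := by
  have h := sum_sq_le_sum_mul_sum_of_sq_le_mul univ (r := fun j => P i j * y j)
    (fun j _ => nonneg_of_mem_rowStochastic hP)
    (fun j _ => mul_nonneg (nonneg_of_mem_rowStochastic hP) (sq_nonneg (y j)))
    fun j _ => (by ring : _ = _).le
  simpa [mulVec, dotProduct, sum_row_of_mem_rowStochastic hP i] using h

theorem sum_stationary_mul_sq_mulVec_le (hP : P ∈ rowStochastic ℝ ι) (hπ0 : ∀ i, 0 ≤ π i)
    (hπP : π ᵥ* P = π) (y : ι → ℝ) :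
    ∑ i, π i * (P *ᵥ y) i ^ 2 ≤ ∑ i, π i * y i ^ 2 :=
  calc ∑ i, π i * (P *ᵥ y) i ^ 2
      ≤ ∑ i, π i * ∑ j, P i j * y j ^ 2 := sum_le_sum fun i _ =>
        mul_le_mul_of_nonneg_left (sq_mulVec_le_of_mem_rowStochastic hP y i) (hπ0 i)
    _ = ∑ j, (π ᵥ* P) j * y j ^ 2 := by
        simp only [vecMul, dotProduct, mul_sum, sum_mul, mul_assoc]
        exact sum_comm
    _ = ∑ i, π i * y i ^ 2 := by rw [hπP]

theorem abs_sum_stationary_mul_mulVec_mul_le (hP : P ∈ rowStochastic ℝ ι)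
    (hπ0 : ∀ i, 0 ≤ π i) (hπP : π ᵥ* P = π) (y : ι → ℝ) :
    |∑ i, π i * ((P *ᵥ y) i * y i)| ≤ ∑ i, π i * y i ^ 2 := by
  have hA : 0 ≤ ∑ i, π i * y i ^ 2 := sum_nonneg fun i _ => mul_nonneg (hπ0 i) (sq_nonneg _)
  refine abs_le_of_sq_le_sq ?_ hA
  calc (∑ i, π i * ((P *ᵥ y) i * y i)) ^ 2
      ≤ (∑ i, π i * (P *ᵥ y) i ^ 2) * ∑ i, π i * y i ^ 2 := sq_sum_weight_mul_le _ _ _ hπ0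
    _ ≤ (∑ i, π i * y i ^ 2) ^ 2 := by
      rw [sq]
      exact mul_le_mul_of_nonneg_right (sum_stationary_mul_sq_mulVec_le hP hπ0 hπP y) hA

theorem sum_stationary_mul_sq_mul_mulVec_sub_le (hP : P ∈ rowStochastic ℝ ι)
    (hπ0 : ∀ i, 0 ≤ π i) (hπP : π ᵥ* P = π) {γ : ℝ} (hγ : 0 ≤ γ) (y : ι → ℝ) :
    ∑ i, π i * (γ * (P *ᵥ y) i - y i) ^ 2 ≤ (1 + γ) ^ 2 * ∑ i, π i * y i ^ 2 := by
  have hPy := sum_stationary_mul_sq_mulVec_le hP hπ0 hπP y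
  have hcross := neg_le_of_abs_le (abs_sum_stationary_mul_mulVec_mul_le hP hπ0 hπP y)
  rw [sum_weight_mul_sub_sq]
  nlinarith [mul_le_mul_of_nonneg_left hPy (sq_nonneg γ), mul_le_mul_of_nonneg_left hcross hγ]

theorem sum_stationary_mul_mul_mulVec_sub_mul_le (hP : P ∈ rowStochastic ℝ ι)
    (hπ0 : ∀ i, 0 ≤ π i) (hπP : π ᵥ* P = π) {γ : ℝ} (hγ : 0 ≤ γ) (y : ι → ℝ) :
    ∑ i, π i * ((γ * (P *ᵥ y) i - y i) * y i) ≤ -(1 - γ) * ∑ i, π i * y i ^ 2 := by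
  have hcross := le_of_abs_le (abs_sum_stationary_mul_mulVec_mul_le hP hπ0 hπP y)
  have h : ∑ i, π i * ((γ * (P *ᵥ y) i - y i) * y i)
      = γ * ∑ i, π i * ((P *ᵥ y) i * y i) - ∑ i, π i * y i ^ 2 := by
    simp only [mul_sum, ← sum_sub_distrib]
    exact sum_congr rfl fun i _ => by ring
  nlinarith [mul_le_mul_of_nonneg_left hcross hγ]

end MarkovChain

section TemporalDifference

variable {ι κ : Type*} [Fintype ι] [Fintype κ] {P : Matrix ι ι ℝ} {π : ι → ℝ} {γ : ℝ}

theorem sum_sq_add_transpose_mulVec_le [DecidableEq ι] (hP : P ∈ rowStochastic ℝ ι)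
    (hπ0 : ∀ i, 0 ≤ π i) (hπP : π ᵥ* P = π) (hγ : 0 ≤ γ) (Φ : Matrix ι κ ℝ) {lam : ℝ}
    (hlam : IsGreatest {t | ∃ v : ι → ℝ, ∑ i, v i ^ 2 = 1 ∧
      t = √(∑ m, ((Φᵀ * diagonal fun i => √(π i)) *ᵥ v) m ^ 2)} lam)
    (d : κ → ℝ) :
    ∑ m, (d + Φᵀ *ᵥ fun i => π i * (γ * (P *ᵥ (Φ *ᵥ d)) i - (Φ *ᵥ d) i)) m ^ 2
      ≤ ∑ m, d m ^ 2 - (2 * (1 - γ) - lam ^ 2 * (1 + γ) ^ 2) * ∑ i, π i * (Φ *ᵥ d) i ^ 2 := by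
  set y := Φ *ᵥ d
  set z : ι → ℝ := fun i => γ * (P *ᵥ y) i - y i
  set g := Φᵀ *ᵥ fun i => π i * z i
  have hexpand : ∑ m, (d + g) m ^ 2 = ∑ m, d m ^ 2 + 2 * (d ⬝ᵥ g) + ∑ m, g m ^ 2 := by
    simp only [Pi.add_apply, add_sq, sum_add_distrib, dotProduct, mul_sum, mul_assoc]
  have hcross : d ⬝ᵥ g = ∑ i, π i * (z i * y i) := by
    rw [dotProduct_mulVec, vecMul_transpose]
    exact sum_congr rfl fun i _ => by ring
  have hg : g = (Φᵀ * diagonal fun i => √(π i)) *ᵥ fun i => √(π i) * z i := by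
    have hD : ((diagonal fun i => √(π i)) *ᵥ fun i => √(π i) * z i) = fun i => π i * z i :=
      funext fun i => by rw [mulVec_diagonal, ← mul_assoc, Real.mul_self_sqrt (hπ0 i)]
    rw [← mulVec_mulVec, hD]
  have hgsq : ∑ m, g m ^ 2 ≤ lam ^ 2 * ∑ i, π i * z i ^ 2 := by
    rw [hg]
    refine (sum_sq_mulVec_le_of_isGreatest _ hlam _).trans_eq ?_
    simp only [mul_pow, Real.sq_sqrt (hπ0 _)]
  have hz := sum_stationary_mul_sq_mul_mulVec_sub_le hP hπ0 hπP hγ y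
  have hzy := sum_stationary_mul_mul_mulVec_sub_mul_le hP hπ0 hπP hγ y
  rw [hexpand, hcross]
  nlinarith [mul_le_mul_of_nonneg_left hz (sq_nonneg lam)]

theorem sum_mul_sub_eq_add_transpose_mulVec {Φ : Matrix ι κ ℝ} {k : ι → ℝ}
    {F : (κ → ℝ) → ι → κ → ℝ} (hπ1 : ∑ i, π i = 1)
    (hF : ∀ r i m, F r i m =
      Φ i m * k i + γ * Φ i m * (∑ j, P i j * (∑ m', Φ j m' * r m'))
        - Φ i m * (∑ m', Φ i m' * r m') + r m)
    (r s : κ → ℝ) (m : κ) :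
    ∑ i, π i * (F r i m - F s i m)
      = ((r - s) + Φᵀ *ᵥ fun i => π i * (γ * (P *ᵥ (Φ *ᵥ (r - s))) i - (Φ *ᵥ (r - s)) i)) m := by
  rw [mulVec_sub, mulVec_sub]
  simp only [hF, Pi.add_apply, Pi.sub_apply, mulVec, dotProduct, transpose_apply]
  rw [← one_mul (r m - s m), ← hπ1, sum_mul, ← sum_add_distrib]
  exact sum_congr rfl fun i _ => by ring

end TemporalDifference

theorem stmt_13_general (s M : ℕ) (hM : 0 < M)
    (P : Matrix (Fin s) (Fin s) ℝ) (hP0 : ∀ i j, 0 ≤ P i j) (hP1 : ∀ i, ∑ j, P i j = 1)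
    (π : Fin s → ℝ) (hπ0 : ∀ i, 0 < π i) (hπ1 : ∑ i, π i = 1)
    (hstat : ∀ j, ∑ i, π i * P i j = π j)
    (γ : ℝ) (hγ : γ ∈ Set.Ioo (0:ℝ) 1)
    (Φ : Matrix (Fin s) (Fin M) ℝ) (hΦ : Function.Injective Φ.mulVec)
    (k : Fin s → ℝ)
    (F : (Fin M → ℝ) → Fin s → Fin M → ℝ)
    (hF : ∀ r i m, F r i m =
      Φ i m * k i + γ * Φ i m * (∑ j, P i j * (∑ m', Φ j m' * r m'))
        - Φ i m * (∑ m', Φ i m' * r m') + r m)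
    (Ψ : Matrix (Fin M) (Fin s) ℝ)
    (hΨ : Ψ = Φ.transpose * Matrix.diagonal (fun i => Real.sqrt (π i)))
    (lamM : ℝ)
    (hlamM : IsGreatest
      {t | ∃ v : Fin s → ℝ, (∑ i, (v i)^2) = 1 ∧ t = Real.sqrt (∑ m, (Ψ.mulVec v m)^2)}
      lamM)
    (hlam_small : lamM < Real.sqrt (2*(1-γ)) / (1+γ))
    (α : ℝ)
    (hα : α = Real.sqrt (1 -
      (⨅ r : {r : Fin M → ℝ // r ≠ 0},
        (∑ i, π i * (Φ.mulVec r.1 i)^2) / (∑ m, (r.1 m)^2)) *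
      (2*(1-γ) - lamM^2 * (1+γ)^2))) :
    α < 1 ∧
    ∀ r s' : Fin M → ℝ,
      Real.sqrt (∑ m, (∑ i, π i * (F r i m - F s' i m))^2) ≤
        α * Real.sqrt (∑ m, (r m - s' m)^2) := by
  obtain ⟨hγ0, hγ1⟩ := hγ
  subst hΨ
  set μ := ⨅ r : {r : Fin M → ℝ // r ≠ 0}, (∑ i, π i * (Φ *ᵥ r.1) i ^ 2) / ∑ m, r.1 m ^ 2
  set c := 2 * (1 - γ) - lamM ^ 2 * (1 + γ) ^ 2
  have hc : 0 < c := by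
    have hlam0 : 0 ≤ lamM := by
      obtain ⟨v, -, rfl⟩ := hlamM.1
      positivity
    have h := (Real.lt_sqrt (by positivity)).1 ((lt_div_iff₀ (by linarith)).1 hlam_small)
    rw [mul_pow] at h
    linarith
  have hμ : 0 < μ := by
    have : Nonempty (Fin M) := ⟨⟨0, hM⟩⟩
    obtain ⟨c₀, hc₀, h⟩ := exists_pos_mul_sum_sq_le_sum_weight_mul_sq_mulVec Φ hΦ hπ0
    exact hc₀.trans_le (le_iInf_div_sum_sq h)
  refine ⟨?_, fun r s' => ?_⟩
  · rw [hα, Real.sqrt_lt' one_pos]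
    nlinarith [mul_pos hμ hc]
  have hπ0' : ∀ i, 0 ≤ π i := fun i => (hπ0 i).le
  have hcore := sum_sq_add_transpose_mulVec_le (mem_rowStochastic_iff_sum.2 ⟨hP0, hP1⟩) hπ0'
    (funext hstat) hγ0.le Φ hlamM (r - s')
  have hcoer := iInf_div_sum_sq_mul_le (Q := fun x => ∑ i, π i * (Φ *ᵥ x) i ^ 2)
    (fun x => sum_nonneg fun i _ => mul_nonneg (hπ0' i) (sq_nonneg _)) (r - s')
  simp only [← sum_mul_sub_eq_add_transpose_mulVec hπ1 hF r s'] at hcore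
  simp only [Pi.sub_apply] at hcore hcoer
  rw [hα, ← Real.sqrt_mul' _ (sum_nonneg fun m _ => sq_nonneg _)]
  exact Real.sqrt_le_sqrt (by nlinarith [mul_le_mul_of_nonneg_left hcoer hc.le])

/-- contraction property of the averaged TD(0) map. Under the feature
scaling assumption `λ_M < √(2(1-γ))/(1+γ)`, the map `r ↦ ∑ᵢ π(i) F(r,i)` is an
`α`-contraction in the Euclidean norm with the stated explicit `α < 1`. -/
theorem stmt_13 (s M : ℕ) (hs : 0 < s) (hM : 0 < M)
    (P : Matrix (Fin s) (Fin s) ℝ) (hP0 : ∀ i j, 0 ≤ P i j) (hP1 : ∀ i, ∑ j, P i j = 1)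
    (hirr : ∀ i j, ∃ n : ℕ, 0 < (P ^ n) i j)
    (π : Fin s → ℝ) (hπ0 : ∀ i, 0 < π i) (hπ1 : ∑ i, π i = 1)
    (hstat : ∀ j, ∑ i, π i * P i j = π j)
    (γ : ℝ) (hγ : γ ∈ Set.Ioo (0:ℝ) 1)
    (Φ : Matrix (Fin s) (Fin M) ℝ) (hΦ : Function.Injective Φ.mulVec)
    (k : Fin s → ℝ)
    (F : (Fin M → ℝ) → Fin s → Fin M → ℝ)
    (hF : ∀ r i m, F r i m =
      Φ i m * k i + γ * Φ i m * (∑ j, P i j * (∑ m', Φ j m' * r m'))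
        - Φ i m * (∑ m', Φ i m' * r m') + r m)
    (Ψ : Matrix (Fin M) (Fin s) ℝ)
    (hΨ : Ψ = Φ.transpose * Matrix.diagonal (fun i => Real.sqrt (π i)))
    (lamM : ℝ)
    (hlamM : IsGreatest
      {t | ∃ v : Fin s → ℝ, (∑ i, (v i)^2) = 1 ∧ t = Real.sqrt (∑ m, (Ψ.mulVec v m)^2)}
      lamM)
    (hlam_small : lamM < Real.sqrt (2*(1-γ)) / (1+γ))
    (α : ℝ)
    (hα : α = Real.sqrt (1 -
      (⨅ r : {r : Fin M → ℝ // r ≠ 0},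
        (∑ i, π i * (Φ.mulVec r.1 i)^2) / (∑ m, (r.1 m)^2)) *
      (2*(1-γ) - lamM^2 * (1+γ)^2))) :
    α < 1 ∧
    ∀ r s' : Fin M → ℝ,
      Real.sqrt (∑ m, (∑ i, π i * (F r i m - F s' i m))^2) ≤
        α * Real.sqrt (∑ m, (r m - s' m)^2) :=
  stmt_13_general s M hM P hP0 hP1 π hπ0 hπ1 hstat γ hγ Φ hΦ k F hF Ψ hΨ lamM hlamM hlam_small α hα
end

section
/- Let $\Gamma \in (0,1)$ and $c > 0$. Then the sequence $\upsilon(n) := c\left(e^{-\Gamma\sum_{m=0}^{n-1}\frac{1}{m+1}} + \sum_{k=0}^{n-1} e^{-\Gamma\sum_{m=k+1}^{n-1}\frac{1}{m+1}}\frac{1}{(k+1)^2}\right)$ satisfies $\upsilon(n) \le \frac{c'}{n^{\Gamma}}$ for some constant $c' > 0$ and all $n \ge 1$. -/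
/-!
Comparing the harmonic sum with the logarithm, `∑_{m=a}^{b-1} 1/(m+1) ≥ log((b+1)/(a+1))`, turns each
exponential weight into a power: `e^{-Γ ∑_{m=k+1}^{n-1} 1/(m+1)} ≤ ((k+2)/n)^Γ`. The `k`-th summand is then
at most `2^Γ (k+1)^{Γ-2} / n^Γ`, and `∑_k (k+1)^{Γ-2}` converges because `2 - Γ > 1`.
-/

open Real Finset

lemma log_sub_log_le_sum_Ico_inv {a b : ℕ} (h : a ≤ b) :
    log ((b : ℝ) + 1) - log ((a : ℝ) + 1) ≤ ∑ m ∈ Ico a b, 1 / ((m : ℝ) + 1) := by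
  induction b, h using Nat.le_induction with
  | base => simp
  | succ b hb ih =>
    have hstep : log ((b : ℝ) + 1 + 1) - log ((b : ℝ) + 1) ≤ 1 / ((b : ℝ) + 1) := by
      rw [← log_div (by positivity) (by positivity)]
      have hq : ((b : ℝ) + 1 + 1) / ((b : ℝ) + 1) - 1 = 1 / ((b : ℝ) + 1) := by
        field_simp; ring
      linarith [log_le_sub_one_of_pos (x := ((b : ℝ) + 1 + 1) / ((b : ℝ) + 1)) (by positivity)]
    rw [sum_Ico_succ_top hb]
    push_cast
    linarith

lemma exp_neg_mul_sum_Ico_inv_le {Γ : ℝ} (hΓ : 0 ≤ Γ) {a b : ℕ} (h : a ≤ b) :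
    exp (-Γ * ∑ m ∈ Ico a b, 1 / ((m : ℝ) + 1)) ≤ (((a : ℝ) + 1) / ((b : ℝ) + 1)) ^ Γ := by
  rw [rpow_def_of_pos (by positivity), log_div (by positivity) (by positivity)]
  exact exp_le_exp.mpr (by nlinarith [log_sub_log_le_sum_Ico_inv h])

lemma nat_add_two_rpow_le {Γ : ℝ} (hΓ : 0 ≤ Γ) (k : ℕ) :
    ((k : ℝ) + 2) ^ Γ ≤ 2 ^ Γ * ((k : ℝ) + 1) ^ Γ := by
  rw [← mul_rpow (by norm_num) (by positivity)]
  exact rpow_le_rpow (by positivity) (by linarith) hΓ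

lemma summable_nat_add_one_rpow {p : ℝ} (hp : p < -1) :
    Summable fun k : ℕ => ((k : ℝ) + 1) ^ p := by
  have h := (summable_nat_add_iff (f := fun k : ℕ => (k : ℝ) ^ p) 1).mpr
    (summable_nat_rpow.mpr hp)
  exact h.congr fun k => by push_cast; rfl

lemma exp_neg_mul_sum_Ico_inv_mul_inv_sq_le {Γ : ℝ} (hΓ : 0 ≤ Γ) {k n : ℕ} (hk : k < n) :
    exp (-Γ * ∑ m ∈ Ico (k + 1) n, 1 / ((m : ℝ) + 1)) * (1 / ((k : ℝ) + 1) ^ 2)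
      ≤ 2 ^ Γ * ((k : ℝ) + 1) ^ (Γ - 2) / (n : ℝ) ^ Γ := by
  have hn : (0 : ℝ) < n := by exact_mod_cast (k.zero_le.trans_lt hk)
  have hweight : exp (-Γ * ∑ m ∈ Ico (k + 1) n, 1 / ((m : ℝ) + 1))
      ≤ ((k : ℝ) + 2) ^ Γ / (n : ℝ) ^ Γ := by
    calc _ ≤ (((k : ℝ) + 2) / ((n : ℝ) + 1)) ^ Γ := by
            simpa [add_assoc, one_add_one_eq_two] using exp_neg_mul_sum_Ico_inv_le hΓ hk
      _ ≤ (((k : ℝ) + 2) / n) ^ Γ := by gcongr; linarith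
      _ = ((k : ℝ) + 2) ^ Γ / (n : ℝ) ^ Γ := div_rpow (by positivity) hn.le Γ
  have hsplit : ((k : ℝ) + 1) ^ (Γ - 2) = ((k : ℝ) + 1) ^ Γ * (1 / ((k : ℝ) + 1) ^ 2) := by
    rw [rpow_sub (by positivity), rpow_two, div_eq_mul_one_div]
  calc _ ≤ ((k : ℝ) + 2) ^ Γ / (n : ℝ) ^ Γ * (1 / ((k : ℝ) + 1) ^ 2) := by gcongr
    _ ≤ 2 ^ Γ * ((k : ℝ) + 1) ^ Γ / (n : ℝ) ^ Γ * (1 / ((k : ℝ) + 1) ^ 2) := by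
        gcongr; exact nat_add_two_rpow_le hΓ k
    _ = 2 ^ Γ * ((k : ℝ) + 1) ^ (Γ - 2) / (n : ℝ) ^ Γ := by rw [hsplit]; ring

/-- the finite-time mean-square error recursion bound
`υ(n) ≤ c'/n^Γ` for `Γ ∈ (0,1)`. -/
theorem stmt_18 (Γ c : ℝ) (hΓ : Γ ∈ Set.Ioo (0:ℝ) 1) (hc : 0 < c) :
    ∃ c' > 0, ∀ n : ℕ, 1 ≤ n →
      c * (Real.exp (-Γ * ∑ m ∈ Finset.range n, (1:ℝ)/((m:ℝ)+1)) +
            ∑ k ∈ Finset.range n,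
              Real.exp (-Γ * ∑ m ∈ Finset.Ico (k+1) n, (1:ℝ)/((m:ℝ)+1)) *
                (1/((k:ℝ)+1)^2))
        ≤ c' / (n:ℝ) ^ Γ := by
  obtain ⟨hΓ0, hΓ1⟩ := hΓ
  set T := ∑' k : ℕ, ((k : ℝ) + 1) ^ (Γ - 2)
  have hsum := summable_nat_add_one_rpow (p := Γ - 2) (by linarith)
  have hT : 0 ≤ T := tsum_nonneg fun k => by positivity
  refine ⟨c * (1 + 2 ^ Γ * T), by positivity, fun n hn => ?_⟩
  have hn0 : (0 : ℝ) < n := by exact_mod_cast hn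
  have hfirst : exp (-Γ * ∑ m ∈ range n, 1 / ((m : ℝ) + 1)) ≤ 1 / (n : ℝ) ^ Γ := by
    calc _ ≤ (1 / ((n : ℝ) + 1)) ^ Γ := by
            have h := exp_neg_mul_sum_Ico_inv_le hΓ0.le n.zero_le
            rwa [Nat.cast_zero, zero_add, ← range_eq_Ico] at h
      _ ≤ (1 / (n : ℝ)) ^ Γ := by gcongr; linarith
      _ = 1 / (n : ℝ) ^ Γ := by rw [div_rpow zero_le_one hn0.le, one_rpow]
  have hrest : ∑ k ∈ range n, exp (-Γ * ∑ m ∈ Ico (k + 1) n, 1 / ((m : ℝ) + 1))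
        * (1 / ((k : ℝ) + 1) ^ 2) ≤ 2 ^ Γ * T / (n : ℝ) ^ Γ := by
    calc _ ≤ ∑ k ∈ range n, 2 ^ Γ * ((k : ℝ) + 1) ^ (Γ - 2) / (n : ℝ) ^ Γ :=
          sum_le_sum fun k hk => exp_neg_mul_sum_Ico_inv_mul_inv_sq_le hΓ0.le (mem_range.mp hk)
      _ = 2 ^ Γ * (∑ k ∈ range n, ((k : ℝ) + 1) ^ (Γ - 2)) / (n : ℝ) ^ Γ := by
          rw [mul_sum, sum_div]
      _ ≤ 2 ^ Γ * T / (n : ℝ) ^ Γ := by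
          gcongr; exact hsum.sum_le_tsum _ fun k _ => by positivity
  calc _ ≤ c * (1 / (n : ℝ) ^ Γ + 2 ^ Γ * T / (n : ℝ) ^ Γ) := by gcongr
    _ = c * (1 + 2 ^ Γ * T) / (n : ℝ) ^ Γ := by ring
end
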